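/- arXiv:1512.06283 — 2 statements merged into one kernel-verified Lean document; each statement's English description precedes it below -/
import Mathlib

section
/- Let $F$ be a properly colored fixed-end-vertex walk in a loopless edge-colored multigraph $G$ whose first and last vertices both equal $u$, with first edge of color $i$ and last edge of color $j$. Let $G'$ be obtained from $G$ by duplicating every edge of $F$ (with multiplicity equal to the number of traversals). Then for every color $c$: if $c \notin \{i,j\}$ then $d'(u) - 2 d'_c(u) \ge d(u) - 2 d_c(u) + 2$; if $c \in \{i,j\}$ and $i \ne j$ then $d'(u) - 2 d'_c(u) \ge d(u) - 2 d_c(u)$; and if $i = j = c$ then $d'(u) - 2 d'_c(u) \ge d(u) - 2 d_c(u) - 2$. -/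
/-- An edge-colored multigraph: edges indexed by a type `E`, each with an unordered pair
of end-vertices and a color (a natural number). -/
structure ECM (V : Type) (E : Type) where
  ends : E → Sym2 V
  color : E → ℕ

namespace ECM

/-- A walk from `u` to `v`: a sequence of edges, each consistent with the vertex sequence. -/
inductive Walk {V E : Type} (G : ECM V E) : V → V → Type
  | nil (v : V) : Walk G v v
  | cons {u v w : V} (e : E) (h : G.ends e = s(u, v)) (p : Walk G v w) : Walk G u w

/-- The list of edges of a walk, in order. -/
def Walk.edges {V E : Type} {G : ECM V E} : {u v : V} → G.Walk u v → List E
  | _, _, .nil _ => []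
  | _, _, .cons e _ p => e :: p.edges

/-- A fixed-end-vertex walk is properly colored (PC) if consecutive edges have distinct
colors (no condition between the last and first edges, even if the walk is closed). -/
def Walk.IsPC {V E : Type} {G : ECM V E} {u v : V} (p : G.Walk u v) : Prop :=
  List.Chain' (· ≠ ·) (p.edges.map G.color)

/-- Concatenation of walks. -/
def Walk.append {V E : Type} {G : ECM V E} :
    {u v w : V} → G.Walk u v → G.Walk v w → G.Walk u w
  | _, _, _, .nil _, q => q
  | _, _, _, .cons e h p, q => .cons e h (p.append q)

/-- The degree of a vertex: the number of edges incident with it. -/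
noncomputable def deg {V E : Type} (G : ECM V E) (u : V) : ℕ := {e : E | u ∈ G.ends e}.ncard

/-- The color-`i` degree of a vertex: the number of edges of color `i` incident with it. -/
noncomputable def degC {V E : Type} (G : ECM V E) (u : V) (i : ℕ) : ℕ :=
  {e : E | u ∈ G.ends e ∧ G.color e = i}.ncard

/-- `G` is connected: any two vertices are joined by a walk. -/
def Connected {V E : Type} (G : ECM V E) : Prop := ∀ x y : V, Nonempty (G.Walk x y)

/-- A closed walk is properly colored cyclically: it has at least one edge, consecutive
edges have distinct colors, and the last edge's color differs from the first edge's color. -/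
def Walk.IsPCClosed {V E : Type} {G : ECM V E} {u : V} (p : G.Walk u u) : Prop :=
  p.edges ≠ [] ∧ List.Chain' (· ≠ ·) (p.edges.map G.color) ∧
    ∀ a ∈ (p.edges.map G.color).getLast?, ∀ b ∈ (p.edges.map G.color).head?, a ≠ b

/-- A closed walk is an Euler trail if it traverses every edge exactly once. -/
def Walk.IsEuler {V E : Type} {G : ECM V E} {u : V} (p : G.Walk u u) : Prop :=
  p.edges.Nodup ∧ ∀ e : E, e ∈ p.edges

/-- The multigraph obtained from `G` by duplicating every edge along the walk `p`
(one new parallel copy per traversal). -/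
def dup {V E : Type} (G : ECM V E) {a b : V} (p : G.Walk a b) :
    ECM V (E ⊕ Fin p.edges.length) where
  ends := Sum.elim G.ends fun i => G.ends (p.edges.get i)
  color := Sum.elim G.color fun i => G.color (p.edges.get i)

end ECM

/-!
Write `d(u) - 2 d_c(u)` as a sum over edges of a balance that is `-1` on edges of color `c`
at `u`, `1` on other edges at `u` and `0` elsewhere; duplicating the walk adds the balances
of its traversals. A properly colored walk passes through `u` between two edges of distinct
colors, so each interior visit adds at least `1 + 1 - 2 = 0`, and only the first and last
edges remain, contributing `1 - 2[i = c]` and `1 - 2[j = c]`.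
-/

namespace ECM

variable {V E : Type} (G : ECM V E)

open Classical in
noncomputable def balance (u : V) (c : ℕ) (e : E) : ℤ :=
  if u ∈ G.ends e then (if G.color e = c then -1 else 1) else 0

theorem balance_of_mem {u : V} {c : ℕ} {e : E} (h : u ∈ G.ends e) :
    G.balance u c e = if G.color e = c then -1 else 1 :=
  if_pos h

theorem balance_of_notMem {u : V} {c : ℕ} {e : E} (h : u ∉ G.ends e) : G.balance u c e = 0 :=
  if_neg h

theorem deg_sub_two_degC_eq_sum_balance [Fintype E] (u : V) (c : ℕ) :
    (G.deg u : ℤ) - 2 * G.degC u c = ∑ e, G.balance u c e := by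
  classical
  simp only [deg, degC, Set.ncard_eq_toFinset_card', Set.toFinset_ofPred,
    Finset.natCast_card_filter, Finset.mul_sum, ← Finset.sum_sub_distrib]
  refine Finset.sum_congr rfl fun e _ => ?_
  unfold balance
  split_ifs <;> simp_all

theorem _root_.List.sum_univ_get_eq_sum_map {α M : Type} [AddCommMonoid M] (l : List α)
    (f : α → M) : ∑ k : Fin l.length, f (l.get k) = (l.map f).sum := by
  rw [← List.sum_ofFn]
  conv_rhs => rw [← List.ofFn_get l, List.map_ofFn]
  rfl

theorem sum_balance_dup [Fintype E] {a b : V} (p : G.Walk a b) (u : V) (c : ℕ) :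
    ∑ x, (G.dup p).balance u c x = ∑ e, G.balance u c e + (p.edges.map (G.balance u c)).sum := by
  rw [Fintype.sum_sum_type, ← List.sum_univ_get_eq_sum_map]
  rfl

theorem balance_add_balance_nonneg {u : V} {c : ℕ} {e e' : E} (h : u ∈ G.ends e)
    (h' : u ∈ G.ends e') (hc : G.color e ≠ G.color e') :
    0 ≤ G.balance u c e + G.balance u c e' := by
  rw [G.balance_of_mem h, G.balance_of_mem h']
  split_ifs <;> omega

open Classical in
theorem balance_eq_of_ends {a v : V} {e : E} (h : G.ends e = s(a, v)) (hav : a ≠ v)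
    (u : V) (c : ℕ) :
    G.balance u c e =
      (if a = u then G.balance u c e else 0) + (if v = u then G.balance u c e else 0) := by
  by_cases ha : a = u <;> by_cases hv : v = u
  · exact absurd (ha.trans hv.symm) hav
  all_goals simp only [ha, hv, if_true, if_false, add_zero, zero_add]
  exact G.balance_of_notMem (by simp [h, Sym2.mem_iff, Ne.symm ha, Ne.symm hv])

namespace Walk

variable {G}

theorem IsPC.of_cons {a v b : V} {e : E} {h : G.ends e = s(a, v)} {p : G.Walk v b}
    (hp : (cons e h p).IsPC) : p.IsPC :=
  List.IsChain.tail hp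

theorem IsPC.color_ne {a v w b : V} {e e' : E} {h : G.ends e = s(a, v)}
    {h' : G.ends e' = s(v, w)} {p : G.Walk w b} (hp : (cons e h (cons e' h' p)).IsPC) :
    G.color e ≠ G.color e' :=
  (List.isChain_cons_cons.mp hp).1

theorem mem_ends_of_head? {a b : V} (p : G.Walk a b) {e : E} (he : p.edges.head? = some e) :
    a ∈ G.ends e := by
  cases p with
  | nil => simp [edges] at he
  | cons e' h q =>
    obtain rfl : e' = e := by simpa [edges] using he
    simp [h]

theorem mem_ends_of_getLast? {a b : V} (p : G.Walk a b) {e : E}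
    (he : p.edges.getLast? = some e) : b ∈ G.ends e := by
  induction p with
  | nil => simp [edges] at he
  | cons e' h q ih =>
    cases q with
    | nil =>
      obtain rfl : e' = e := by simpa [edges] using he
      simp [h]
    | cons e'' h' q' => exact ih (by simpa [edges] using he)

open Classical in
theorem le_sum_balance (hloop : ∀ e : E, ¬ (G.ends e).IsDiag) (u : V) (c : ℕ) {a b : V}
    (p : G.Walk a b) (hp : p.IsPC) {e₀ e₁ : E} (h₀ : p.edges.head? = some e₀)
    (h₁ : p.edges.getLast? = some e₁) :
    (if a = u then G.balance u c e₀ else 0) + (if b = u then G.balance u c e₁ else 0)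
      ≤ (p.edges.map (G.balance u c)).sum := by
  induction p generalizing e₀ with
  | nil => simp [edges] at h₀
  | @cons a v b e h q ih =>
    have hav : a ≠ v := fun hav => hloop e (by rw [h, hav]; exact Sym2.mk_isDiag_iff.mpr rfl)
    obtain rfl : e = e₀ := by simpa [edges] using h₀
    have hsplit := G.balance_eq_of_ends h hav u c
    cases q with
    | nil =>
      obtain rfl : e = e₁ := by simpa [edges] using h₁
      simp only [edges, List.map_cons, List.map_nil, List.sum_cons, List.sum_nil, add_zero]
      exact hsplit.ge
    | cons e' h' q =>
      have hq := ih hp.of_cons (e₀ := e') rfl (by simpa [edges] using h₁)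
      have hvisit : 0 ≤ (if v = u then G.balance u c e else 0) +
          (if v = u then G.balance u c e' else 0) := by
        split_ifs with hv
        · subst hv
          exact G.balance_add_balance_nonneg (by simp [h]) (by simp [h']) hp.color_ne
        · rfl
      simp only [edges, List.map_cons, List.sum_cons] at hq ⊢
      linarith

end Walk

end ECM

/-- Duplicating every edge of a properly colored closed fixed-end-vertex walk `p` with
end-vertex `u`, first edge of color `i` and last edge of color `j`: for every color `c`,
the quantity `d(u) - 2 d_c(u)` increases by at least 2 if `c ∉ {i, j}`, is non-increasing...
more precisely does not decrease if `c ∈ {i, j}` with `i ≠ j`, and decreases by at most 2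
if `i = j = c`. -/
theorem dup_closed_walk_endpoint {V E : Type} [Fintype E] (G : ECM V E)
    (hloop : ∀ e : E, ¬ (G.ends e).IsDiag)
    {u : V} (p : G.Walk u u) (hpc : p.IsPC)
    {e₀ e₁ : E} (hhead : p.edges.head? = some e₀) (hlast : p.edges.getLast? = some e₁)
    {i j : ℕ} (hi : G.color e₀ = i) (hj : G.color e₁ = j) :
    ∀ c : ℕ,
      (c ≠ i ∧ c ≠ j →
        (G.deg u : ℤ) - 2 * G.degC u c + 2
          ≤ ((G.dup p).deg u : ℤ) - 2 * (G.dup p).degC u c) ∧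
      ((c = i ∨ c = j) → i ≠ j →
        (G.deg u : ℤ) - 2 * G.degC u c
          ≤ ((G.dup p).deg u : ℤ) - 2 * (G.dup p).degC u c) ∧
      (i = c → j = c →
        (G.deg u : ℤ) - 2 * G.degC u c - 2
          ≤ ((G.dup p).deg u : ℤ) - 2 * (G.dup p).degC u c) := by
  intro c
  have hwalk := p.le_sum_balance hloop u c hpc hhead hlast
  rw [if_pos rfl, if_pos rfl, G.balance_of_mem (p.mem_ends_of_head? hhead),
    G.balance_of_mem (p.mem_ends_of_getLast? hlast), hi, hj] at hwalk
  simp only [ECM.deg_sub_two_degC_eq_sum_balance, ECM.sum_balance_dup]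
  refine ⟨fun ⟨hci, hcj⟩ => ?_, fun hc hij => ?_, fun hic hjc => ?_⟩ <;>
    split_ifs at hwalk <;> omega
end

section
/- Let $F$ be a properly colored fixed-end-vertex open walk in a loopless edge-colored multigraph $G$ with first vertex $u$ and first edge of color $i$, and last vertex $v \neq u$. Let $G'$ be obtained by duplicating every edge of $F$. Then for every color $j$: $d'(u) - 2 d'_j(u) \ge d(u) - 2 d_j(u) - 1$ if $j = i$, and $d'(u) - 2 d'_j(u) \ge d(u) - 2 d_j(u) + 1$ if $j \ne i$. Moreover, the parity of $d(u)$ changes, i.e., $d'(u) \not\equiv d(u) \pmod 2$. -/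
/-!
Duplicating the edges of `p` raises `d(u)` and `d_j(u)` by the number of edges of `p`, counted
with multiplicity, that are incident with `u` (of color `j`, respectively). As `G` is loopless and
`v ≠ u`, these are the first edge of `p` together with, for each later visit of `p` to `u`, the
two edges entering and leaving `u`. Proper coloring makes those two colors differ, so each visit
adds `2` to the count and at most `1` to the color-`j` count; the first edge adds `1` to the count
and to the color-`j` count only when `j = i`.
-/
theorem Set.ncard_setOf_sum {α β : Type*} [Finite α] [Finite β] (P : α ⊕ β → Prop) :
    {x | P x}.ncard = {a | P (.inl a)}.ncard + {b | P (.inr b)}.ncard := by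
  simp only [← Nat.card_coe_set_eq, Set.coe_ofPred, ← Nat.card_sum]
  exact Nat.card_congr Equiv.subtypeSum

theorem List.ncard_setOf_get {α : Type*} (l : List α) (P : α → Prop) [DecidablePred P] :
    {k : Fin l.length | P (l.get k)}.ncard = l.countP P := by
  rw [Set.ncard_eq_toFinset_card', Set.toFinset_ofPred, Finset.card, Finset.filter_val,
    ← Multiset.countP_eq_card_filter, Finset.val_univ_fin, Multiset.coe_countP]
  conv_rhs => rw [← List.map_get_finRange l, List.countP_map]
  rfl

namespace ECM

variable {V E : Type} [DecidableEq V] (G : ECM V E)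

def listDeg (l : List E) (u : V) : ℕ := l.countP (u ∈ G.ends ·)

def listDegC (l : List E) (u : V) (j : ℕ) : ℕ :=
  l.countP fun e => u ∈ G.ends e ∧ G.color e = j

theorem deg_dup [Finite E] {a b : V} (p : G.Walk a b) (u : V) :
    (G.dup p).deg u = G.deg u + G.listDeg p.edges u :=
  (Set.ncard_setOf_sum _).trans
    (congrArg (G.deg u + ·) (p.edges.ncard_setOf_get (u ∈ G.ends ·)))

theorem degC_dup [Finite E] {a b : V} (p : G.Walk a b) (u : V) (j : ℕ) :
    (G.dup p).degC u j = G.degC u j + G.listDegC p.edges u j :=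
  (Set.ncard_setOf_sum _).trans (congrArg (G.degC u j + ·)
    (p.edges.ncard_setOf_get fun e => u ∈ G.ends e ∧ G.color e = j))

variable {G}

theorem listDeg_cons (e : E) (l : List E) (u : V) :
    G.listDeg (e :: l) u = G.listDeg l u + if u ∈ G.ends e then 1 else 0 := by
  simp [listDeg, List.countP_cons]

theorem listDegC_cons (e : E) (l : List E) (u : V) (j : ℕ) :
    G.listDegC (e :: l) u j =
      G.listDegC l u j + if u ∈ G.ends e ∧ G.color e = j then 1 else 0 := by
  simp [listDegC, List.countP_cons]

theorem Walk.listDeg_mod_two (hloop : ∀ e : E, ¬ (G.ends e).IsDiag) (u : V) {x v : V}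
    (q : G.Walk x v) :
    G.listDeg q.edges u % 2 = ((if x = u then 1 else 0) + if v = u then 1 else 0) % 2 := by
  induction q with
  | nil w => simp [listDeg, Walk.edges]; omega
  | cons e h q ih =>
    rename_i a b w
    have hab : a ≠ b := fun hab => hloop e (by simp [h, hab])
    simp only [Walk.edges, listDeg_cons, h, Sym2.mem_iff]
    split_ifs <;> grind

theorem Walk.le_listDeg_sub_two_mul_listDegC (hloop : ∀ e : E, ¬ (G.ends e).IsDiag) {u x v : V}
    (q : G.Walk x v) (hq : q.IsPC) (hv : v ≠ u) (j : ℕ) :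
    (if x = u then if (q.edges.map G.color).head? = some j then -1 else 1 else 0 : ℤ) ≤
      G.listDeg q.edges u - 2 * G.listDegC q.edges u j := by
  induction q with
  | nil w => simp [hv, listDeg, listDegC, Walk.edges]
  | cons e h q ih =>
    rename_i a b w
    obtain ⟨hne, hq⟩ := List.isChain_cons.mp hq
    have ih := ih hq hv
    have hfirst : (q.edges.map G.color).head? = some j → G.color e ≠ j := hne j
    have hab : a ≠ b := fun hab => hloop e (by simp [h, hab])
    simp only [Walk.edges, listDeg_cons, listDegC_cons, h, Sym2.mem_iff, List.map_cons,
      List.head?_cons, Option.some.injEq]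
    -- when `b = u`, the edge `e` and the first edge of `q` enter and leave `u`, and `hfirst`
    -- says that at most one of them has color `j`
    split_ifs at ih ⊢ <;> grind

end ECM

/-- Duplicating every edge of a properly colored open fixed-end-vertex walk `p` from `u` to
`v ≠ u` whose first edge has color `i`: for every color `j`, the quantity `d(u) - 2 d_j(u)`
decreases by at most 1 if `j = i` and increases by at least 1 otherwise; moreover the parity
of `d(u)` changes. -/
theorem dup_open_walk_endpoint {V E : Type} [Fintype E] (G : ECM V E)
    (hloop : ∀ e : E, ¬ (G.ends e).IsDiag)
    {u v : V} (huv : u ≠ v) (p : G.Walk u v) (hpc : p.IsPC)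
    {e₀ : E} (hhead : p.edges.head? = some e₀) {i : ℕ} (hi : G.color e₀ = i) :
    (∀ j : ℕ,
      (j = i → (G.deg u : ℤ) - 2 * G.degC u j - 1
        ≤ ((G.dup p).deg u : ℤ) - 2 * (G.dup p).degC u j) ∧
      (j ≠ i → (G.deg u : ℤ) - 2 * G.degC u j + 1
        ≤ ((G.dup p).deg u : ℤ) - 2 * (G.dup p).degC u j)) ∧
    (G.dup p).deg u % 2 ≠ G.deg u % 2 := by
  classical
  have hcolor : (p.edges.map G.color).head? = some i := by simp [List.head?_map, hhead, hi]
  refine ⟨fun j => ?_, ?_⟩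
  · have hbal := p.le_listDeg_sub_two_mul_listDegC hloop hpc huv.symm j
    rw [if_pos rfl, hcolor] at hbal
    simp only [Option.some_inj] at hbal
    rw [G.deg_dup p, G.degC_dup p]
    push_cast
    constructor
    · rintro rfl
      rw [if_pos rfl] at hbal
      omega
    · intro hj
      rw [if_neg (Ne.symm hj)] at hbal
      omega
  · have hodd := p.listDeg_mod_two hloop u
    rw [if_pos rfl, if_neg huv.symm] at hodd
    rw [G.deg_dup p]
    omega
end
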